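/- Let C : [0,1] → ℝ be continuously differentiable such that t ↦ t·C'(t) is strictly increasing on [0,1]. Let l ∈ (0, 1/6), r = 1 − 2l, and let M be as defined. Then every (3,1)-stochastic measure concentrated on M is a primal solution: for every probability measure π on ℝ³ with π(M) = 1 whose pushforwards under the three coordinate projections all equal Lebesgue measure on [0,1], and for every probability measure ν on [0,1]³ whose pushforwards under the three coordinate projections all equal Lebesgue measure on [0,1], one has ∫ C(x·y·z) dπ ≤ ∫ C(x·y·z) dν. -/

import Mathlib

open Set MeasureTheory

/-! Weak duality. Put `u s = s C'(s)`; since `u` is increasing, `s ↦ C(eˢ)` is convex, so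
`C q + u(q) (log p - log q) ≤ C p`. We build a potential `φ` on `[0,1]` with
`φ x + φ y + φ z ≤ C(xyz)` on the cube and equality on `M`; integrating against the uniform
marginals gives `∫ C(xyz) dπ = 3 ∫₀¹ φ = ∫ (φ x + φ y + φ z) dν ≤ ∫ C(xyz) dν`.

Equality on `M` forces `t φ'(t) = u(m(t))`, where `m(t)` is the value of `xyz` at the point of `M`
with first coordinate `t`. For the inequality, let `x` be the smallest coordinate: the convexity
bound at `q = m(x)` (or at `q = l(1-2l)²` if `x > l`) reduces it to
`φ w - u(q) log w ≤ φ w₀ - u(q) log w₀`, which holds because `m` crosses the level `q` downwards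
at `w₀ = 1-2x` (resp. `w₀ = l`). -/

/-- The set `M ⊆ [0,1]³`: the union of the three segments
`Mx = {(t, 1−2t, 1−2t) : 0 ≤ t ≤ l}`, `My = {(1−2t, t, 1−2t) : 0 ≤ t ≤ l}`,
`Mz = {(1−2t, 1−2t, t) : 0 ≤ t ≤ l}` and the two-dimensional piece
`M₂ = {(x,y,z) : l ≤ x,y,z ≤ 1−2l, xyz = l(1−2l)²}`. -/
def Mset (l : ℝ) : Set (ℝ × ℝ × ℝ) :=
  {p | ∃ t, 0 ≤ t ∧ t ≤ l ∧
    (p = (t, 1 - 2*t, 1 - 2*t) ∨ p = (1 - 2*t, t, 1 - 2*t) ∨ p = (1 - 2*t, 1 - 2*t, t))} ∪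
  {p | l ≤ p.1 ∧ p.1 ≤ 1 - 2*l ∧ l ≤ p.2.1 ∧ p.2.1 ≤ 1 - 2*l ∧ l ≤ p.2.2 ∧ p.2.2 ≤ 1 - 2*l ∧
    p.1 * p.2.1 * p.2.2 = l * (1 - 2*l)^2}

lemma le_of_hasDerivAt_nonpos_of_nonneg {f f' : ℝ → ℝ} {a q b x : ℝ}
    (hf : ContinuousOn f (Icc a b)) (hd : ∀ y ∈ Ioo a b, HasDerivAt f (f' y) y)
    (hle : ∀ y ∈ Ioo a q, f' y ≤ 0) (hge : ∀ y ∈ Ioo q b, 0 ≤ f' y)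
    (hq : q ∈ Icc a b) (hx : x ∈ Icc a b) : f q ≤ f x := by
  rcases le_total x q with hxq | hqx
  · refine antitoneOn_of_hasDerivWithinAt_nonpos (f' := f') (convex_Icc a q)
      (hf.mono (Icc_subset_Icc_right hq.2)) (fun y hy => ?_) (fun y hy => ?_)
      ⟨hx.1, hxq⟩ ⟨hq.1, le_rfl⟩ hxq
    · rw [interior_Icc] at hy ⊢
      exact (hd y ⟨hy.1, hy.2.trans_le hq.2⟩).hasDerivWithinAt
    · exact hle y (by rwa [interior_Icc] at hy)
  · refine monotoneOn_of_hasDerivWithinAt_nonneg (f' := f') (convex_Icc q b)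
      (hf.mono (Icc_subset_Icc_left hq.1)) (fun y hy => ?_) (fun y hy => ?_)
      ⟨le_rfl, hq.2⟩ ⟨hqx, hx.2⟩ hqx
    · rw [interior_Icc] at hy ⊢
      exact (hd y ⟨hq.1.trans_lt hy.1, hy.2⟩).hasDerivWithinAt
    · exact hge y (by rwa [interior_Icc] at hy)

lemma tangent_log_le {C C' : ℝ → ℝ}
    (hC : ∀ t ∈ Icc (0 : ℝ) 1, HasDerivWithinAt C (C' t) (Icc 0 1) t)
    (hU : MonotoneOn (fun t => t * C' t) (Icc 0 1)) {p q : ℝ}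
    (hp : p ∈ Ioc (0 : ℝ) 1) (hq : q ∈ Ioc (0 : ℝ) 1) :
    C q + q * C' q * (Real.log p - Real.log q) ≤ C p := by
  set a := min p q
  have ha : 0 < a := lt_min hp.1 hq.1
  have hsub : Icc a 1 ⊆ Icc 0 1 := Icc_subset_Icc_left ha.le
  have hmin : C q - q * C' q * Real.log q ≤ C p - q * C' q * Real.log p := by
    refine le_of_hasDerivAt_nonpos_of_nonneg (f := fun s => C s - q * C' q * Real.log s)
      (a := a) (b := 1) (f' := fun s => (s * C' s - q * C' q) / s) ?_ (fun s hs => ?_)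
      (fun s hs => ?_) (fun s hs => ?_) ⟨min_le_right _ _, hq.2⟩ ⟨min_le_left _ _, hp.2⟩
    · exact (ContinuousOn.mono (fun t ht => (hC t ht).continuousWithinAt) hsub).sub
        (continuousOn_const.mul (Real.continuousOn_log.mono fun t ht => (ha.trans_le ht.1).ne'))
    · have hs0 : 0 < s := ha.trans hs.1
      refine (((hC s ⟨hs0.le, hs.2.le⟩).hasDerivAt (Icc_mem_nhds hs0 hs.2)).sub
        ((Real.hasDerivAt_log hs0.ne').const_mul (q * C' q))).congr_deriv ?_
      field_simp
    · exact div_nonpos_of_nonpos_of_nonneg (sub_nonpos.2 (hU ⟨(ha.trans hs.1).le, by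
        linarith [hs.2, hq.2]⟩ ⟨hq.1.le, hq.2⟩ hs.2.le)) (ha.trans hs.1).le
    · exact div_nonneg (sub_nonneg.2 (hU ⟨hq.1.le, hq.2⟩ ⟨(hq.1.trans hs.1).le, hs.2.le⟩
        hs.1.le)) (hq.1.trans hs.1).le
  linarith

lemma monotoneOn_mul_one_sub_two_mul_sq :
    MonotoneOn (fun t : ℝ => t * (1 - 2 * t) ^ 2) (Icc 0 (1 / 6)) := by
  intro a ha b hb hab
  simp only [mem_Icc] at ha hb
  nlinarith [mul_nonneg (mul_nonneg (sub_nonneg.2 hab) (by linarith : (0 : ℝ) ≤ 1 - a - b))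
      (by linarith : (0 : ℝ) ≤ 1 - 3 * a - 3 * b),
    mul_nonneg (sub_nonneg.2 hab) (sq_nonneg (a - b))]

lemma antitoneOn_sq_mul_one_sub_div_two :
    AntitoneOn (fun w : ℝ => w ^ 2 * (1 - w) / 2) (Icc (2 / 3) 1) := by
  intro a ha b hb hab
  simp only [mem_Icc] at ha hb
  have ha' : (0 : ℝ) ≤ 3 * a - 2 := by linarith
  have hb' : (0 : ℝ) ≤ 3 * b - 2 := by linarith
  have hab' := sub_nonneg.2 hab
  nlinarith [mul_nonneg hab' (mul_nonneg (by linarith : (0 : ℝ) ≤ a) ha'),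
    mul_nonneg hab' (mul_nonneg (by linarith : (0 : ℝ) ≤ b) hb'),
    mul_nonneg hab' (mul_nonneg (by linarith : (0 : ℝ) ≤ b) ha'), sq_nonneg (b - a)]

/-- For `t ∈ [0,1]` there is a point of `Mset l` with first coordinate `t`, and `pairProd l t` is
the product of its two other coordinates: `(1-2t)²` on `Mx`, `l(1-2l)²/t` on `M₂`, and
`t(1-t)/2` on `My` (where `t = 1-2s`). The `max` only makes the middle branch continuous on `ℝ`. -/
noncomputable def pairProd (l t : ℝ) : ℝ :=
  if t ≤ l then (1 - 2 * t) ^ 2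
  else if t ≤ 1 - 2 * l then l * (1 - 2 * l) ^ 2 / max l t
  else t * (1 - t) / 2

noncomputable def tripleProd (l t : ℝ) : ℝ := t * pairProd l t

section TripleProd

variable {l t : ℝ}

lemma pairProd_of_le (ht : t ≤ l) : pairProd l t = (1 - 2 * t) ^ 2 := if_pos ht

lemma pairProd_of_gt (hl : l < 1 / 3) (ht : 1 - 2 * l < t) : pairProd l t = t * (1 - t) / 2 := by
  rw [pairProd, if_neg (by linarith), if_neg ht.not_ge]

lemma pairProd_eq_div (ht : t ≠ 0) : pairProd l t = tripleProd l t / t := by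
  rw [tripleProd, mul_div_cancel_left₀ _ ht]

lemma pairProd_mul_comp_tripleProd {C' : ℝ → ℝ} {s : ℝ} (hs : s ≠ 0) :
    pairProd l s * C' (tripleProd l s) = tripleProd l s * C' (tripleProd l s) / s := by
  rw [pairProd_eq_div hs]
  ring

lemma tripleProd_of_le (ht : t ≤ l) : tripleProd l t = t * (1 - 2 * t) ^ 2 := by
  rw [tripleProd, pairProd, if_pos ht]

lemma tripleProd_of_mem_Icc (hl : 0 < l) (ht : t ∈ Icc l (1 - 2 * l)) :
    tripleProd l t = l * (1 - 2 * l) ^ 2 := by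
  rcases ht.1.eq_or_lt with rfl | hlt
  · exact tripleProd_of_le le_rfl
  rw [tripleProd, pairProd, if_neg hlt.not_ge, if_pos ht.2, max_eq_right hlt.le]
  field_simp [(hl.trans hlt).ne']

lemma tripleProd_of_ge (hl : l < 1 / 3) (ht : 1 - 2 * l ≤ t) :
    tripleProd l t = t ^ 2 * (1 - t) / 2 := by
  rcases ht.eq_or_lt with rfl | hlt
  · rw [tripleProd, pairProd, if_neg (by linarith), if_pos le_rfl, max_eq_right (by linarith)]
    have : (1 : ℝ) - 2 * l ≠ 0 := by linarith
    field_simp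
    ring
  rw [tripleProd, pairProd, if_neg (by linarith), if_neg hlt.not_ge]
  ring

variable (hl : l ∈ Ioo 0 (1 / 6))
include hl

lemma tripleProd_le_tripleProd_of_mem_Icc {x : ℝ} (hx : x ∈ Icc 0 l)
    (ht : t ∈ Icc x (1 - 2 * x)) : tripleProd l x ≤ tripleProd l t := by
  have hl6 : Icc 0 l ⊆ Icc 0 (1 / 6) := Icc_subset_Icc_right hl.2.le
  rw [tripleProd_of_le hx.2]
  rcases le_or_gt t l with htl | hlt
  · rw [tripleProd_of_le htl]
    exact monotoneOn_mul_one_sub_two_mul_sq (hl6 hx) (hl6 ⟨hx.1.trans ht.1, htl⟩) ht.1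
  rcases le_or_gt t (1 - 2 * l) with htr | hrt
  · rw [tripleProd_of_mem_Icc hl.1 ⟨hlt.le, htr⟩]
    exact monotoneOn_mul_one_sub_two_mul_sq (hl6 hx) (hl6 ⟨hl.1.le, le_rfl⟩) hx.2
  · rw [tripleProd_of_ge (by linarith [hl.2]) hrt.le]
    calc x * (1 - 2 * x) ^ 2 = (1 - 2 * x) ^ 2 * (1 - (1 - 2 * x)) / 2 := by ring
      _ ≤ t ^ 2 * (1 - t) / 2 := antitoneOn_sq_mul_one_sub_div_two
        ⟨by linarith [hl.2], by linarith [ht.2, hx.1]⟩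
        ⟨by linarith [hl.2, hx.2], by linarith [hx.1]⟩ ht.2

lemma tripleProd_le_tripleProd_of_one_sub_two_mul_le {x : ℝ} (hx : x ∈ Icc 0 l)
    (ht : t ∈ Icc (1 - 2 * x) 1) : tripleProd l t ≤ tripleProd l x := by
  rcases le_or_gt t (1 - 2 * l) with htr | hrt
  · have hxl : x = l := by linarith [ht.1, hx.2]
    rw [hxl, tripleProd_of_mem_Icc hl.1 ⟨by linarith [hl.2, ht.1], htr⟩, tripleProd_of_le le_rfl]
  · rw [tripleProd_of_ge (by linarith [hl.2]) hrt.le, tripleProd_of_le hx.2]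
    calc t ^ 2 * (1 - t) / 2 ≤ (1 - 2 * x) ^ 2 * (1 - (1 - 2 * x)) / 2 :=
          antitoneOn_sq_mul_one_sub_div_two ⟨by linarith [hl.2, hx.2], by linarith [hx.1]⟩
            ⟨by linarith [hl.2], ht.2⟩ ht.1
      _ = x * (1 - 2 * x) ^ 2 := by ring

lemma tripleProd_mem_Icc (ht : t ∈ Icc 0 1) :
    tripleProd l t ∈ Icc 0 (l * (1 - 2 * l) ^ 2) := by
  have hA : tripleProd l l = l * (1 - 2 * l) ^ 2 := tripleProd_of_le le_rfl
  rcases le_total t l with htl | hlt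
  · rw [tripleProd_of_le htl]
    refine ⟨by have := ht.1; positivity, ?_⟩
    exact monotoneOn_mul_one_sub_two_mul_sq ⟨ht.1, htl.trans hl.2.le⟩ ⟨hl.1.le, hl.2.le⟩ htl
  rcases le_total t (1 - 2 * l) with htr | hrt
  · rw [tripleProd_of_mem_Icc hl.1 ⟨hlt, htr⟩]
    exact ⟨by have := hl.1; positivity, le_rfl⟩
  · refine ⟨?_,
      hA ▸ tripleProd_le_tripleProd_of_one_sub_two_mul_le hl ⟨hl.1.le, le_rfl⟩ ⟨hrt, ht.2⟩⟩
    rw [tripleProd_of_ge (by linarith [hl.2]) hrt]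
    have := sub_nonneg.2 ht.2
    positivity

lemma tripleProd_mem_Icc_zero_one (ht : t ∈ Icc 0 1) : tripleProd l t ∈ Icc 0 1 := by
  have h := tripleProd_mem_Icc hl ht
  exact ⟨h.1, h.2.trans (by nlinarith [hl.1, hl.2])⟩

lemma continuous_pairProd : Continuous (pairProd l) := by
  refine Continuous.if_le (by fun_prop) (Continuous.if_le ?_ (by fun_prop) continuous_id
    continuous_const ?_) continuous_id continuous_const ?_
  · exact continuous_const.div (continuous_const.max continuous_id) fun t =>
      (hl.1.trans_le (le_max_left l t)).ne'
  · rintro t rfl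
    rw [max_eq_right (by linarith [hl.2])]
    have : (1 : ℝ) - 2 * l ≠ 0 := by linarith [hl.2]
    field_simp
    ring
  · rintro t rfl
    rw [if_pos (by linarith [hl.2]), max_self]
    field_simp [hl.1.ne']

lemma continuous_tripleProd : Continuous (tripleProd l) :=
  continuous_id.mul (continuous_pairProd hl)

end TripleProd

/-- The derivative is chosen so that `t φ'(t) = u (tripleProd l t)`; the constant `φ(l)` makes
`φ x + φ y + φ z = C(xyz)` on `M₂`, where `log x + log y + log z = 3 log l + 2 log ((1-2l)/l)`. -/
noncomputable def potential (C C' : ℝ → ℝ) (l x : ℝ) : ℝ :=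
  (C (l * (1 - 2 * l) ^ 2)
      - 2 * (l * (1 - 2 * l) ^ 2 * C' (l * (1 - 2 * l) ^ 2)) * Real.log ((1 - 2 * l) / l)) / 3
    + ∫ t in l..x, pairProd l t * C' (tripleProd l t)

section Potential

variable {C C' : ℝ → ℝ} {l : ℝ} (hl : l ∈ Ioo 0 (1 / 6)) (hC' : ContinuousOn C' (Icc 0 1))
lemma potential_self : potential C C' l l = (C (l * (1 - 2 * l) ^ 2)
      - 2 * (l * (1 - 2 * l) ^ 2 * C' (l * (1 - 2 * l) ^ 2)) * Real.log ((1 - 2 * l) / l)) / 3 := by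
  rw [potential, intervalIntegral.integral_same, add_zero]

include hl

lemma potential_of_mem_Icc {x : ℝ} (hx : x ∈ Icc l (1 - 2 * l)) :
    potential C C' l x = potential C C' l l
      + l * (1 - 2 * l) ^ 2 * C' (l * (1 - 2 * l) ^ 2) * Real.log (x / l) := by
  rw [potential_self, potential, add_right_inj]
  have hne : ∀ t ∈ uIcc l x, t ≠ 0 := fun t ht => by
    rw [uIcc_of_le hx.1] at ht; exact (hl.1.trans_le ht.1).ne'
  rw [intervalIntegral.integral_congr
      (g := fun t => l * (1 - 2 * l) ^ 2 * C' (l * (1 - 2 * l) ^ 2) * t⁻¹) fun t ht => ?_,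
    intervalIntegral.integral_const_mul, integral_inv fun h => hne 0 h rfl]
  rw [uIcc_of_le hx.1] at ht
  have hm := tripleProd_of_mem_Icc hl.1 ⟨ht.1, ht.2.trans hx.2⟩
  simp only [pairProd_eq_div (hl.1.trans_le ht.1).ne', hm, div_eq_mul_inv]
  ring

include hC'

lemma continuousOn_pairProd_mul_comp_tripleProd :
    ContinuousOn (fun t => pairProd l t * C' (tripleProd l t)) (Icc 0 1) :=
  (continuous_pairProd hl).continuousOn.mul
    (hC'.comp (continuous_tripleProd hl).continuousOn fun _ => tripleProd_mem_Icc_zero_one hl)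

lemma hasDerivAt_potential {t : ℝ} (ht : t ∈ Ioo 0 1) :
    HasDerivAt (potential C C' l) (pairProd l t * C' (tripleProd l t)) t := by
  have hρ := continuousOn_pairProd_mul_comp_tripleProd hl hC'
  have hsub : uIcc l t ⊆ Icc 0 1 :=
    uIcc_subset_Icc ⟨hl.1.le, by linarith [hl.2]⟩ (Ioo_subset_Icc_self ht)
  exact (intervalIntegral.integral_hasDerivAt_right ((hρ.mono hsub).intervalIntegrable)
    ((hρ.mono Ioo_subset_Icc_self).stronglyMeasurableAtFilter isOpen_Ioo t ht)
    (hρ.continuousAt (Icc_mem_nhds ht.1 ht.2))).const_add _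

lemma continuousOn_potential : ContinuousOn (potential C C' l) (Icc 0 1) := by
  have h := intervalIntegral.continuousOn_primitive_interval' (a := l)
    ((continuousOn_pairProd_mul_comp_tripleProd hl hC').intervalIntegrable_of_Icc (μ := volume)
      zero_le_one)
    (by rw [uIcc_of_le zero_le_one]; exact ⟨hl.1.le, by linarith [hl.2]⟩)
  rw [uIcc_of_le zero_le_one] at h
  exact continuousOn_const.add h

end Potential

section Duality

variable {C C' : ℝ → ℝ} {l : ℝ} (hl : l ∈ Ioo 0 (1 / 6))
  (hC : ∀ t ∈ Icc (0 : ℝ) 1, HasDerivWithinAt C (C' t) (Icc 0 1) t)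
  (hC' : ContinuousOn C' (Icc 0 1)) (hU : MonotoneOn (fun t => t * C' t) (Icc 0 1))
include hl hC'

include hC in
lemma hasDerivAt_potential_add_two_mul_potential_sub {s : ℝ} (hs : s ∈ Ioo 0 l) :
    HasDerivAt (fun s => potential C C' l s + 2 * potential C C' l (1 - 2 * s)
      - C (s * (1 - 2 * s) ^ 2)) 0 s := by
  have hs1 : 0 < 1 - 2 * s := by linarith [hs.2, hl.2]
  have hrs : 1 - 2 * l < 1 - 2 * s := by linarith [hs.2]
  have hlin : HasDerivAt (fun y : ℝ => 1 - 2 * y) (-2) s := by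
    simpa using ((hasDerivAt_id s).const_mul 2).const_sub 1
  have hcub : HasDerivAt (fun y : ℝ => y * (1 - 2 * y) ^ 2) ((1 - 2 * s) * (1 - 6 * s)) s := by
    refine ((hasDerivAt_id s).mul (hlin.pow 2)).congr_deriv ?_
    simp only [id, Pi.pow_apply]
    ring
  have hm : s * (1 - 2 * s) ^ 2 ∈ Ioo 0 1 :=
    ⟨by have := hs.1; positivity, by nlinarith [hs.2, hl.2, mul_pos hs.1 hs1]⟩
  have hCd := (hC _ (Ioo_subset_Icc_self hm)).hasDerivAt (Icc_mem_nhds hm.1 hm.2)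
  refine (((hasDerivAt_potential hl hC' ⟨hs.1, by linarith [hs.2, hl.2]⟩).add
    (((hasDerivAt_potential hl hC' ⟨hs1, by linarith [hs.1]⟩).comp s hlin).const_mul 2)).sub
    (hCd.comp s hcub)).congr_deriv ?_
  rw [pairProd_of_le hs.2.le, pairProd_of_gt (by linarith [hl.2]) hrs,
    tripleProd_of_le hs.2.le, tripleProd_of_ge (by linarith [hl.2]) hrs.le,
    show (1 - 2 * s) ^ 2 * (1 - (1 - 2 * s)) / 2 = s * (1 - 2 * s) ^ 2 by ring]
  ring

include hC in
lemma potential_add_two_mul_potential {t : ℝ} (ht : t ∈ Icc 0 l) :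
    potential C C' l t + 2 * potential C C' l (1 - 2 * t) = C (t * (1 - 2 * t) ^ 2) := by
  set E := fun s =>
    potential C C' l s + 2 * potential C C' l (1 - 2 * s) - C (s * (1 - 2 * s) ^ 2)
  have hEl : E l = 0 := by
    simp only [E]
    rw [potential_of_mem_Icc hl ⟨by linarith [hl.2], le_rfl⟩, potential_self]
    ring
  suffices E t = E l by simp only [E] at this; linarith
  rcases ht.2.eq_or_lt with rfl | htl
  · rfl
  have hEc : ContinuousOn E (Icc 0 l) := by
    have hφ := continuousOn_potential (C := C) hl hC'
    have hCc : ContinuousOn C (Icc 0 1) := fun s hs => (hC s hs).continuousWithinAt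
    refine ((hφ.mono fun s hs => ⟨hs.1, by linarith [hs.2, hl.2]⟩).add (continuousOn_const.mul
      (hφ.comp (by fun_prop) fun s hs => ⟨by linarith [hs.2, hl.2], by linarith [hs.1]⟩))).sub
      (hCc.comp (by fun_prop) fun s hs => ?_)
    exact tripleProd_of_le hs.2 ▸ tripleProd_mem_Icc_zero_one hl ⟨hs.1, by linarith [hs.2, hl.2]⟩
  obtain ⟨c, hc, hslope⟩ := exists_hasDerivAt_eq_slope E (fun _ => 0) htl
    (hEc.mono (Icc_subset_Icc_left ht.1)) fun s hs =>
      hasDerivAt_potential_add_two_mul_potential_sub hl hC hC' ⟨ht.1.trans_lt hs.1, hs.2⟩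
  rw [eq_comm, div_eq_zero_iff, sub_eq_zero, sub_eq_zero] at hslope
  exact (hslope.resolve_right htl.ne').symm

include hC in
lemma potential_add_add_of_mem_Mset {p : ℝ × ℝ × ℝ} (hp : p ∈ Mset l) :
    potential C C' l p.1 + potential C C' l p.2.1 + potential C C' l p.2.2
      = C (p.1 * p.2.1 * p.2.2) := by
  rcases hp with ⟨t, ht0, htl, hp⟩ | ⟨hx, hx', hy, hy', hz, hz', hxyz⟩
  · have h := potential_add_two_mul_potential hl hC hC' ⟨ht0, htl⟩
    rcases hp with rfl | rfl | rfl <;> convert h using 1 <;> ring_nf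
  · obtain ⟨x, y, z⟩ := p
    dsimp only at *
    have hl0 := hl.1
    have hx0 : 0 < x / l := div_pos (hl0.trans_le hx) hl0
    have hy0 : 0 < y / l := div_pos (hl0.trans_le hy) hl0
    have hz0 : 0 < z / l := div_pos (hl0.trans_le hz) hl0
    have hlog : Real.log (x / l) + Real.log (y / l) + Real.log (z / l)
        = 2 * Real.log ((1 - 2 * l) / l) := by
      rw [← Real.log_mul hx0.ne' hy0.ne', ← Real.log_mul (mul_pos hx0 hy0).ne' hz0.ne',
        show (2 : ℝ) = (2 : ℕ) by norm_num, ← Real.log_pow]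
      congr 1
      field_simp
      rw [hxyz]
      ring
    rw [potential_of_mem_Icc hl ⟨hx, hx'⟩, potential_of_mem_Icc hl ⟨hy, hy'⟩,
      potential_of_mem_Icc hl ⟨hz, hz'⟩, hxyz, potential_self]
    linear_combination (l * (1 - 2 * l) ^ 2 * C' (l * (1 - 2 * l) ^ 2)) * hlog

include hU in
lemma monotoneOn_potential : MonotoneOn (potential C C' l) (Icc 0 1) := by
  refine monotoneOn_of_hasDerivWithinAt_nonneg
    (f' := fun s => pairProd l s * C' (tripleProd l s)) (convex_Icc 0 1)
    (continuousOn_potential hl hC')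
    (fun s hs => ?_) (fun s hs => ?_) <;> rw [interior_Icc] at hs
  · exact (hasDerivAt_potential hl hC' hs).hasDerivWithinAt
  · have hm := tripleProd_mem_Icc_zero_one hl (Ioo_subset_Icc_self hs)
    rw [pairProd_mul_comp_tripleProd hs.1.ne']
    refine div_nonneg ?_ hs.1.le
    simpa using hU ⟨le_rfl, zero_le_one⟩ hm hm.1

include hU in
/-- `w (φ w - u(q) log w)' = u (tripleProd l w) - u(q)`, which changes sign from `+` to `-`
at `w₀`. -/
lemma potential_sub_mul_log_le {q a w₀ w : ℝ} (hq : q ∈ Icc 0 1) (ha : 0 < a)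
    (hw₀ : w₀ ∈ Icc a 1)
    (hle : ∀ s ∈ Ioo a w₀, q ≤ tripleProd l s) (hge : ∀ s ∈ Ioo w₀ 1, tripleProd l s ≤ q)
    (hw : w ∈ Icc a 1) :
    potential C C' l w - q * C' q * Real.log w ≤ potential C C' l w₀ - q * C' q * Real.log w₀ := by
  have hsub : Icc a 1 ⊆ Icc 0 1 := Icc_subset_Icc_left ha.le
  suffices q * C' q * Real.log w₀ - potential C C' l w₀
      ≤ q * C' q * Real.log w - potential C C' l w by linarith
  refine le_of_hasDerivAt_nonpos_of_nonneg
    (f := fun s => q * C' q * Real.log s - potential C C' l s)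
    (f' := fun s => (q * C' q - tripleProd l s * C' (tripleProd l s)) / s) ?_ (fun s hs => ?_)
    (fun s hs => ?_) (fun s hs => ?_) hw₀ hw
  · exact (continuousOn_const.mul (Real.continuousOn_log.mono fun s hs =>
      (ha.trans_le hs.1).ne')).sub ((continuousOn_potential hl hC').mono hsub)
  · have hs0 : 0 < s := ha.trans hs.1
    refine (((Real.hasDerivAt_log hs0.ne').const_mul _).sub
      (hasDerivAt_potential hl hC' ⟨hs0, hs.2⟩)).congr_deriv ?_
    rw [pairProd_mul_comp_tripleProd hs0.ne']
    field_simp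
  · have hs0 : 0 < s := ha.trans hs.1
    refine div_nonpos_of_nonpos_of_nonneg (sub_nonpos.2 (hU hq ?_ (hle s hs))) hs0.le
    exact tripleProd_mem_Icc_zero_one hl ⟨hs0.le, by linarith [hs.2, hw₀.2]⟩
  · have hs0 : 0 < s := ha.trans (hw₀.1.trans_lt hs.1)
    refine div_nonneg (sub_nonneg.2 (hU ?_ hq (hge s hs))) hs0.le
    exact tripleProd_mem_Icc_zero_one hl ⟨hs0.le, hs.2.le⟩

include hC hU in
lemma potential_add_add_le_of_mem_Ioc {x y z : ℝ} (hx : x ∈ Ioc 0 l) (hy : y ∈ Icc x 1)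
    (hz : z ∈ Icc x 1) :
    potential C C' l x + potential C C' l y + potential C C' l z ≤ C (x * y * z) := by
  set q := x * (1 - 2 * x) ^ 2
  have hx0 := hx.1
  have hy0 : 0 < y := hx0.trans_le hy.1
  have hz0 : 0 < z := hx0.trans_le hz.1
  have hr : 0 < 1 - 2 * x := by linarith [hx.2, hl.2]
  have hmx : tripleProd l x = q := tripleProd_of_le hx.2
  have hq := tripleProd_mem_Icc_zero_one hl ⟨hx0.le, by linarith [hx.2, hl.2]⟩
  rw [hmx] at hq
  have hbound : ∀ w ∈ Icc x 1, potential C C' l w - q * C' q * Real.log w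
      ≤ potential C C' l (1 - 2 * x) - q * C' q * Real.log (1 - 2 * x) := fun w hw =>
    potential_sub_mul_log_le hl hC' hU hq hx0 ⟨by linarith [hx.2, hl.2], by linarith⟩
      (fun s hs => hmx ▸ tripleProd_le_tripleProd_of_mem_Icc hl ⟨hx0.le, hx.2⟩
        (Ioo_subset_Icc_self hs))
      (fun s hs => hmx ▸ tripleProd_le_tripleProd_of_one_sub_two_mul_le hl ⟨hx0.le, hx.2⟩
        ⟨hs.1.le, hs.2.le⟩) hw
  have htan := tangent_log_le hC hU (p := x * y * z) ⟨by positivity, by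
    nlinarith [mul_le_one₀ hy.2 hz0.le hz.2, hx.2, hl.2]⟩ ⟨by positivity, hq.2⟩
  have hlog : q * C' q * (Real.log (x * y * z) - Real.log q) = q * C' q * Real.log y
      + q * C' q * Real.log z - 2 * (q * C' q * Real.log (1 - 2 * x)) := by
    rw [Real.log_mul (by positivity) hz0.ne', Real.log_mul hx0.ne' hy0.ne',
      Real.log_mul hx0.ne' (by positivity), Real.log_pow]
    push_cast
    ring
  linarith [hbound y hy, hbound z hz, potential_add_two_mul_potential hl hC hC' ⟨hx0.le, hx.2⟩]

include hC hU in
lemma potential_add_add_le_of_lt {x y z : ℝ} (hx : x ∈ Ioc l 1) (hy : y ∈ Icc x 1)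
    (hz : z ∈ Icc x 1) :
    potential C C' l x + potential C C' l y + potential C C' l z ≤ C (x * y * z) := by
  have hl0 := hl.1
  have hA := tripleProd_of_le (le_refl l) ▸
    tripleProd_mem_Icc_zero_one hl ⟨hl0.le, by linarith [hl.2]⟩
  have hself := potential_self (C := C) (C' := C') (l := l)
  set A := l * (1 - 2 * l) ^ 2
  have hx0 : 0 < x := hl0.trans hx.1
  have hy0 : 0 < y := hx0.trans_le hy.1
  have hz0 : 0 < z := hx0.trans_le hz.1
  have hr : 0 < 1 - 2 * l := by linarith [hl.2]
  have hbound : ∀ w ∈ Icc l 1, potential C C' l w - A * C' A * Real.log w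
      ≤ potential C C' l l - A * C' A * Real.log l := fun w hw =>
    potential_sub_mul_log_le hl hC' hU hA hl0 ⟨le_rfl, by linarith [hl.2]⟩
      (fun s hs => absurd hs.2 hs.1.not_gt)
      (fun s hs => (tripleProd_mem_Icc hl ⟨(hl0.trans hs.1).le, hs.2.le⟩).2) hw
  have htan := tangent_log_le hC hU (p := x * y * z) ⟨by positivity, by
    nlinarith [mul_le_one₀ hy.2 hz0.le hz.2, hx.2]⟩ ⟨by positivity, hA.2⟩
  have hlog : A * C' A * (Real.log (x * y * z) - Real.log A)
      + 2 * (A * C' A) * Real.log ((1 - 2 * l) / l)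
      = A * C' A * Real.log x + A * C' A * Real.log y + A * C' A * Real.log z
        - 3 * (A * C' A * Real.log l) := by
    rw [Real.log_mul (by positivity) hz0.ne', Real.log_mul hx0.ne' hy0.ne',
      Real.log_mul hl0.ne' (by positivity), Real.log_pow, Real.log_div hr.ne' hl0.ne']
    push_cast
    ring
  linarith [hbound x ⟨hx.1.le, hx.2⟩, hbound y ⟨hx.1.le.trans hy.1, hy.2⟩,
    hbound z ⟨hx.1.le.trans hz.1, hz.2⟩]

include hC hU in
lemma potential_add_add_le_of_le_of_le {x y z : ℝ} (hx : x ∈ Icc 0 1) (hy : y ∈ Icc x 1)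
    (hz : z ∈ Icc x 1) :
    potential C C' l x + potential C C' l y + potential C C' l z ≤ C (x * y * z) := by
  rcases hx.1.eq_or_lt with rfl | hx0
  · have h := potential_add_two_mul_potential hl hC hC' ⟨le_rfl, hl.1.le⟩
    norm_num at h
    have hmono := monotoneOn_potential (C := C) hl hC' hU
    rw [zero_mul, zero_mul, ← h]
    linarith [hmono hy ⟨zero_le_one, le_rfl⟩ hy.2, hmono hz ⟨zero_le_one, le_rfl⟩ hz.2]
  rcases le_or_gt x l with hxl | hlx
  · exact potential_add_add_le_of_mem_Ioc hl hC hC' hU ⟨hx0, hxl⟩ hy hz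
  · exact potential_add_add_le_of_lt hl hC hC' hU ⟨hlx, hx.2⟩ hy hz

include hC hU in
lemma potential_add_add_le {x y z : ℝ} (hx : x ∈ Icc 0 1) (hy : y ∈ Icc 0 1)
    (hz : z ∈ Icc 0 1) :
    potential C C' l x + potential C C' l y + potential C C' l z ≤ C (x * y * z) := by
  rcases le_total x y with hxy | hyx
  · rcases le_total x z with hxz | hzx
    · exact potential_add_add_le_of_le_of_le hl hC hC' hU hx ⟨hxy, hy.2⟩ ⟨hxz, hz.2⟩
    · rw [show x * y * z = z * x * y by ring]
      linarith [potential_add_add_le_of_le_of_le hl hC hC' hU hz ⟨hzx, hx.2⟩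
        ⟨hzx.trans hxy, hy.2⟩]
  · rcases le_total y z with hyz | hzy
    · rw [show x * y * z = y * x * z by ring]
      linarith [potential_add_add_le_of_le_of_le hl hC hC' hU hy ⟨hyx, hx.2⟩ ⟨hyz, hz.2⟩]
    · rw [show x * y * z = z * x * y by ring]
      linarith [potential_add_add_le_of_le_of_le hl hC hC' hU hz ⟨hzy.trans hyx, hx.2⟩
        ⟨hzy, hy.2⟩]

end Duality

lemma isClosed_Mset (l : ℝ) : IsClosed (Mset l) := by
  have hseg : {p : ℝ × ℝ × ℝ | ∃ t, 0 ≤ t ∧ t ≤ l ∧ (p = (t, 1 - 2*t, 1 - 2*t) ∨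
      p = (1 - 2*t, t, 1 - 2*t) ∨ p = (1 - 2*t, 1 - 2*t, t))}
      = (fun t => (t, 1 - 2*t, 1 - 2*t)) '' Icc 0 l ∪ ((fun t => (1 - 2*t, t, 1 - 2*t)) '' Icc 0 l
        ∪ (fun t => (1 - 2*t, 1 - 2*t, t)) '' Icc 0 l) := by
    ext p
    simp only [mem_ofPred_eq, mem_union, mem_image, mem_Icc]
    aesop
  have hsurf : {p : ℝ × ℝ × ℝ | l ≤ p.1 ∧ p.1 ≤ 1 - 2*l ∧ l ≤ p.2.1 ∧ p.2.1 ≤ 1 - 2*l ∧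
      l ≤ p.2.2 ∧ p.2.2 ≤ 1 - 2*l ∧ p.1 * p.2.1 * p.2.2 = l * (1 - 2*l)^2}
      = Icc l (1 - 2*l) ×ˢ Icc l (1 - 2*l) ×ˢ Icc l (1 - 2*l)
        ∩ (fun p => p.1 * p.2.1 * p.2.2) ⁻¹' {l * (1 - 2*l)^2} := by
    ext p
    simp only [mem_inter_iff, mem_prod, mem_Icc, mem_preimage, mem_singleton_iff]
    aesop
  rw [Mset, hseg, hsurf]
  exact ((isCompact_Icc.image (by fun_prop)).union ((isCompact_Icc.image (by fun_prop)).union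
    (isCompact_Icc.image (by fun_prop)))).isClosed.union
    ((isClosed_Icc.prod (isClosed_Icc.prod isClosed_Icc)).inter
      (isClosed_singleton.preimage (by fun_prop)))

def HasMarginals (μ : Measure (ℝ × ℝ × ℝ)) (ρ : Measure ℝ) : Prop :=
  μ.map (fun p => p.1) = ρ ∧ μ.map (fun p => p.2.1) = ρ ∧ μ.map (fun p => p.2.2) = ρ

lemma HasMarginals.integral_add_add {μ : Measure (ℝ × ℝ × ℝ)} {ρ : Measure ℝ} {φ : ℝ → ℝ}
    (hμ : HasMarginals μ ρ) (hφ : Integrable φ ρ) :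
    Integrable (fun p => φ p.1 + φ p.2.1 + φ p.2.2) μ ∧
      ∫ p, φ p.1 + φ p.2.1 + φ p.2.2 ∂μ = 3 * ∫ t, φ t ∂ρ := by
  have key : ∀ g : ℝ × ℝ × ℝ → ℝ, Measurable g → μ.map g = ρ →
      Integrable (fun p => φ (g p)) μ ∧ ∫ p, φ (g p) ∂μ = ∫ t, φ t ∂ρ := by
    rintro g hg rfl
    exact ⟨(integrable_map_measure hφ.1 hg.aemeasurable).1 hφ,
      (integral_map hg.aemeasurable hφ.1).symm⟩
  obtain ⟨i₁, e₁⟩ := key _ measurable_fst hμ.1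
  obtain ⟨i₂, e₂⟩ := key _ measurable_snd.fst hμ.2.1
  obtain ⟨i₃, e₃⟩ := key _ measurable_snd.snd hμ.2.2
  refine ⟨(i₁.add i₂).add i₃, ?_⟩
  rw [integral_add (f := fun p => φ p.1 + φ p.2.1) (i₁.add i₂) i₃, integral_add i₁ i₂, e₁, e₂, e₃]
  ring

lemma integral_le_integral_of_add_add_le {μ ν : Measure (ℝ × ℝ × ℝ)} {ρ : Measure ℝ}
    {f : ℝ × ℝ × ℝ → ℝ} {φ : ℝ → ℝ} (hφ : Integrable φ ρ) (hμ : HasMarginals μ ρ)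
    (hν : HasMarginals ν ρ) (hfμ : ∀ᵐ p ∂μ, φ p.1 + φ p.2.1 + φ p.2.2 = f p)
    (hfν : ∀ᵐ p ∂ν, φ p.1 + φ p.2.1 + φ p.2.2 ≤ f p) (hf : Integrable f ν) :
    ∫ p, f p ∂μ ≤ ∫ p, f p ∂ν :=
  calc ∫ p, f p ∂μ = ∫ p, φ p.1 + φ p.2.1 + φ p.2.2 ∂μ :=
        integral_congr_ae (hfμ.mono fun _ => Eq.symm)
    _ = ∫ p, φ p.1 + φ p.2.1 + φ p.2.2 ∂ν := by
      rw [(hμ.integral_add_add hφ).2, (hν.integral_add_add hφ).2]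
    _ ≤ ∫ p, f p ∂ν := integral_mono_ae (hν.integral_add_add hφ).1 hf hfν

theorem stochastic_on_M_is_primal_solution (C C' : ℝ → ℝ)
    (hC : ∀ t ∈ Set.Icc (0 : ℝ) 1, HasDerivWithinAt C (C' t) (Set.Icc (0 : ℝ) 1) t)
    (hC' : ContinuousOn C' (Set.Icc (0 : ℝ) 1))
    (hU : StrictMonoOn (fun t => t * C' t) (Set.Icc (0 : ℝ) 1))
    (l : ℝ) (hl : l ∈ Set.Ioo (0 : ℝ) (1/6))
    (π : Measure (ℝ × ℝ × ℝ)) [IsProbabilityMeasure π] (hπM : π (Mset l) = 1)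
    (hπ1 : π.map (fun p => p.1) = volume.restrict (Set.Icc (0 : ℝ) 1))
    (hπ2 : π.map (fun p => p.2.1) = volume.restrict (Set.Icc (0 : ℝ) 1))
    (hπ3 : π.map (fun p => p.2.2) = volume.restrict (Set.Icc (0 : ℝ) 1))
    (ν : Measure (ℝ × ℝ × ℝ)) [IsProbabilityMeasure ν]
    (hνcube : ν (Set.Icc (0 : ℝ) 1 ×ˢ Set.Icc (0 : ℝ) 1 ×ˢ Set.Icc (0 : ℝ) 1) = 1)
    (hν1 : ν.map (fun p => p.1) = volume.restrict (Set.Icc (0 : ℝ) 1))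
    (hν2 : ν.map (fun p => p.2.1) = volume.restrict (Set.Icc (0 : ℝ) 1))
    (hν3 : ν.map (fun p => p.2.2) = volume.restrict (Set.Icc (0 : ℝ) 1)) :
    ∫ p, C (p.1 * p.2.1 * p.2.2) ∂π ≤ ∫ p, C (p.1 * p.2.1 * p.2.2) ∂ν := by
  have hM : ∀ᵐ p ∂π, p ∈ Mset l :=
    (ae_mem_iff_measure_eq (isClosed_Mset l).measurableSet.nullMeasurableSet).2
      (by rw [hπM, measure_univ])
  have hcube : ∀ᵐ p ∂ν, p ∈ Icc (0 : ℝ) 1 ×ˢ Icc (0 : ℝ) 1 ×ˢ Icc (0 : ℝ) 1 :=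
    (ae_mem_iff_measure_eq (measurableSet_Icc.prod (measurableSet_Icc.prod
      measurableSet_Icc)).nullMeasurableSet).2 (by rw [hνcube, measure_univ])
  have hCν : Integrable (fun p => C (p.1 * p.2.1 * p.2.2)) ν := by
    rw [← Measure.restrict_eq_self_of_ae_mem hcube]
    have hCc : ContinuousOn C (Icc 0 1) := fun t ht => (hC t ht).continuousWithinAt
    exact ContinuousOn.integrableOn_compact (isCompact_Icc.prod (isCompact_Icc.prod isCompact_Icc))
      (hCc.comp (by fun_prop) fun p hp =>
        unitInterval.mul_mem (unitInterval.mul_mem hp.1 hp.2.1) hp.2.2)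
  exact integral_le_integral_of_add_add_le (continuousOn_potential hl hC').integrableOn_Icc
    ⟨hπ1, hπ2, hπ3⟩ ⟨hν1, hν2, hν3⟩
    (hM.mono fun p hp => potential_add_add_of_mem_Mset hl hC hC' hp)
    (hcube.mono fun p hp => potential_add_add_le hl hC hC' hU.monotoneOn hp.1 hp.2.1 hp.2.2) hCν
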